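/- In the rational quaternion algebra B = (6, -3)/ℚ, the order O = ℤ·1 + ℤ·(i/2 + k/6) + ℤ·(1/2 + j/2) + ℤ·(k/3) has reduced discriminant 6; equivalently, the determinant of the Gram matrix (trd(eᵢ·e̅ⱼ)) of its basis equals 6² = 36. -/

import Mathlib

open scoped Quaternion

/-- The reduced trace of a quaternion. -/
def trd63 (x : ℍ[ℚ, 6, -3]) : ℚ := 2 * x.re

/-- The ℤ-basis e₁ = 1, e₂ = i/2 + k/6, e₃ = 1/2 + j/2, e₄ = k/3 of the order
O in the quaternion algebra (6,-3)/ℚ. -/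
def basis63 : Fin 4 → ℍ[ℚ, 6, -3]
  | 0 => 1
  | 1 => ⟨0, 1/2, 0, 1/6⟩
  | 2 => ⟨1/2, 0, 1/2, 0⟩
  | 3 => ⟨0, 0, 0, 1/3⟩

/-!
In the basis `1, i, j, k` of `(a, b)/R` the reduced trace form `trd (x y̅) = 2 (x y̅).re` is
diagonal with entries `2, -2a, -2b, 2ab`. Hence the Gram determinant of any four quaternions is
`16 a² b² · det(C)²`, where `C` is their coordinate matrix. For the order in question
`det C = 1/12`, and `16 · 6² · 3² / 12² = 36`.
-/

open scoped Matrix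

namespace QuaternionAlgebra

variable {R : Type*} [CommRing R] {a b : R} {ι : Type*}

theorem re_mul_star (x y : ℍ[R,a,b]) :
    (x * star y).re =
      x.re * y.re - a * x.imI * y.imI - b * x.imJ * y.imJ + a * b * x.imK * y.imK := by
  simp only [re_mul, re_star, imI_star, imJ_star, imK_star]
  ring

def trdGram (v : ι → ℍ[R,a,b]) : Matrix ι ι R :=
  Matrix.of fun i j => 2 * (v i * star (v j)).re

def coordMatrix (v : ι → ℍ[R,a,b]) : Matrix ι (Fin 4) R :=
  Matrix.of fun i => equivTuple a 0 b (v i)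

theorem trdGram_eq (v : ι → ℍ[R,a,b]) :
    trdGram v =
      coordMatrix v * Matrix.diagonal ![2, -2 * a, -2 * b, 2 * a * b] * (coordMatrix v)ᵀ := by
  ext i j
  rw [trdGram, Matrix.of_apply, re_mul_star]
  simp [Matrix.mul_apply, Fin.sum_univ_four, coordMatrix, Matrix.diagonal_apply]
  ring

theorem det_trdGram (v : Fin 4 → ℍ[R,a,b]) :
    (trdGram v).det = 16 * a ^ 2 * b ^ 2 * (coordMatrix v).det ^ 2 := by
  rw [trdGram_eq, Matrix.det_mul, Matrix.det_mul, Matrix.det_transpose,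
    Matrix.det_diagonal, Fin.prod_univ_four]
  simp only [Matrix.cons_val_zero, Matrix.cons_val_one, Matrix.cons_val]
  ring

end QuaternionAlgebra

open QuaternionAlgebra

theorem coordMatrix_basis63 :
    coordMatrix basis63 = !![1, 0, 0, 0; 0, 1/2, 0, 1/6; 1/2, 0, 1/2, 0; 0, 0, 0, 1/3] := by
  ext i j
  fin_cases i <;> fin_cases j <;> rfl

theorem det_coordMatrix_basis63 : (coordMatrix basis63).det = 1 / 12 := by
  rw [coordMatrix_basis63, Matrix.det_succ_row_zero]
  simp [Fin.sum_univ_succ, Matrix.det_fin_three, Fin.succAbove]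
  norm_num

theorem quatOrder63_discriminant :
    (Matrix.of fun i j : Fin 4 => trd63 (basis63 i * star (basis63 j))).det = 36 := by
  change (trdGram basis63).det = 36
  rw [det_trdGram, det_coordMatrix_basis63]
  norm_num
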